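/- For every graph H and every edge uv of H, T(H/uv) ≥ T(H) - 1, where T(G) is the minimum over all edges xy of G of the number of triangles of G containing xy. -/

import Mathlib

/-!
An edge `ab` of `H/uv` comes from an edge `xy` of `H` whose common neighbours other than `v` all
remain common neighbours of `a` and `b`: take `xy = ab` if `ab` is already an edge of `H`, and
otherwise `a` (say) is the merged vertex and we take `ub` if it is an edge of `H`, else `vb`.
Since only the vertex `v` is lost, `xy` lies in at most one more triangle of `H` than `ab` does
in `H/uv`.
-/

/-- The simple graph obtained from `H` by contracting the edge `uv`: the vertex
`v` is removed and `u` becomes the merged vertex, adjacent to all former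
neighbors of `u` and of `v`. -/
def contractEdge {V : Type*} (H : SimpleGraph V) (u v : V) : SimpleGraph {x : V // x ≠ v} where
  Adj a b := (H.Adj a.1 b.1 ∨ (a.1 = u ∧ H.Adj v b.1) ∨ (b.1 = u ∧ H.Adj v a.1)) ∧ a ≠ b
  symm := by
    refine ⟨?_⟩
    rintro a b ⟨h, hne⟩
    refine ⟨?_, hne.symm⟩
    rcases h with h | ⟨h1, h2⟩ | ⟨h1, h2⟩
    · exact Or.inl h.symm
    · exact Or.inr (Or.inr ⟨h1, h2⟩)
    · exact Or.inr (Or.inl ⟨h1, h2⟩)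
  loopless := by refine ⟨?_⟩; rintro a ⟨-, hne⟩; exact hne rfl

theorem Set.ncard_sub_one_le_of_sdiff_singleton_subset_image {α β : Type*} [Finite β]
    {f : β → α} (hf : f.Injective) {s : Set α} {t : Set β} {a : α} (h : s \ {a} ⊆ f '' t) :
    s.ncard - 1 ≤ t.ncard :=
  calc s.ncard - 1 ≤ (s \ {a}).ncard := Set.pred_ncard_le_ncard_sdiff_singleton s a
    _ ≤ (f '' t).ncard := Set.ncard_le_ncard h (Set.toFinite _)
    _ = t.ncard := Set.ncard_image_of_injective t hf

namespace contractEdge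

variable {V : Type*} {H : SimpleGraph V} {u v : V} {a b : {x : V // x ≠ v}}

theorem adj_of_adj (h : H.Adj a.1 b.1) : (contractEdge H u v).Adj a b :=
  ⟨Or.inl h, fun hab => H.ne_of_adj h (congrArg Subtype.val hab)⟩

theorem adj_of_eq_of_adj (ha : a.1 = u) (hb : b.1 ≠ u) (h : H.Adj v b.1) :
    (contractEdge H u v).Adj a b :=
  ⟨Or.inr (Or.inl ⟨ha, h⟩), fun hab => hb (hab ▸ ha)⟩

theorem exists_adj_commonNeighbors_sdiff_subset_of_eq_of_adj (ha : a.1 = u) (hvb : H.Adj v b.1) :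
    ∃ x y, H.Adj x y ∧
      H.commonNeighbors x y \ {v} ⊆ Subtype.val '' (contractEdge H u v).commonNeighbors a b := by
  by_cases hub : H.Adj u b.1
  · refine ⟨u, b.1, hub, ?_⟩
    rintro w ⟨⟨hwu, hwb⟩, hwv⟩
    exact ⟨⟨w, hwv⟩, ⟨adj_of_adj (ha ▸ hwu), adj_of_adj hwb⟩, rfl⟩
  · refine ⟨v, b.1, hvb, ?_⟩
    rintro w ⟨⟨hvw, hwb⟩, hwv⟩
    have hwu : w ≠ u := by rintro rfl; exact hub hwb.symm
    exact ⟨⟨w, hwv⟩, ⟨adj_of_eq_of_adj ha hwu hvw, adj_of_adj hwb⟩, rfl⟩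

theorem exists_adj_commonNeighbors_sdiff_subset (hab : (contractEdge H u v).Adj a b) :
    ∃ x y, H.Adj x y ∧
      H.commonNeighbors x y \ {v} ⊆ Subtype.val '' (contractEdge H u v).commonNeighbors a b := by
  obtain ⟨hab | ⟨ha, hvb⟩ | ⟨hb, hva⟩, -⟩ := hab
  · exact ⟨a.1, b.1, hab, fun w ⟨⟨hwa, hwb⟩, hwv⟩ =>
      ⟨⟨w, hwv⟩, ⟨adj_of_adj hwa, adj_of_adj hwb⟩, rfl⟩⟩
  · exact exists_adj_commonNeighbors_sdiff_subset_of_eq_of_adj ha hvb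
  · rw [SimpleGraph.commonNeighbors_symm]
    exact exists_adj_commonNeighbors_sdiff_subset_of_eq_of_adj hb hva

end contractEdge

theorem stmt_12_general {V : Type*} [Fintype V] (H : SimpleGraph V)
    (u v : V) (τ : ℕ)
    (hτ : ∀ x y : V, H.Adj x y → τ ≤ (H.neighborSet x ∩ H.neighborSet y).ncard) :
    ∀ a b : {x : V // x ≠ v}, (contractEdge H u v).Adj a b →
      τ - 1 ≤ ((contractEdge H u v).neighborSet a ∩ (contractEdge H u v).neighborSet b).ncard := by
  intro a b hab
  obtain ⟨x, y, hxy, hsub⟩ := contractEdge.exists_adj_commonNeighbors_sdiff_subset hab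
  calc τ - 1 ≤ (H.commonNeighbors x y).ncard - 1 := Nat.sub_le_sub_right (hτ x y hxy) 1
    _ ≤ ((contractEdge H u v).commonNeighbors a b).ncard :=
      Set.ncard_sub_one_le_of_sdiff_singleton_subset_image Subtype.val_injective hsub

/-- `T(H/uv) ≥ T(H) - 1`: if every edge of `H` lies in at least `τ` triangles
(i.e. its endpoints have at least `τ` common neighbors), then every edge of
`H/uv` lies in at least `τ - 1` triangles. -/
theorem stmt_12 {V : Type*} [Fintype V] [DecidableEq V] (H : SimpleGraph V)
    (u v : V) (huv : H.Adj u v) (τ : ℕ)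
    (hτ : ∀ x y : V, H.Adj x y → τ ≤ (H.neighborSet x ∩ H.neighborSet y).ncard) :
    ∀ a b : {x : V // x ≠ v}, (contractEdge H u v).Adj a b →
      τ - 1 ≤ ((contractEdge H u v).neighborSet a ∩ (contractEdge H u v).neighborSet b).ncard :=
  stmt_12_general H u v τ hτ
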